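/- arXiv:2005.11987 — 6 statements merged into one kernel-verified Lean document; each statement's English description precedes it below -/
import Mathlib

section
/- Let e be a partial isometry in a C*-algebra A (i.e. e e* e = e) and let x ∈ A with ‖x‖ ≤ 1. If ‖e + x‖ = 1 and ‖e − x‖ = 1, then x is orthogonal to e, i.e. e x* = 0 and x* e = 0. -/
/-!
Let `p = e e*`, a projection with `p e = e`. Compressing the parallelogram identity by `p` gives
`p (e + x)(e + x)* p + p (e - x)(e - x)* p = 2 p + 2 p x x* p`, and each term on the left is
`≤ p` since `‖e ± x‖ ≤ 1`. Hence `(x* p)* (x* p) = p x x* p ≤ 0`, so `x* p = 0` and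
`x* e = x* p e = 0`. Applying this to the partial isometry `e*` and `x*` gives `e x* = 0`.
-/

theorem isStarProjection_mul_star_of_mul_star_mul_self {R : Type*} [Semigroup R] [StarMul R]
    {e : R} (he : e * star e * e = e) : IsStarProjection (e * star e) where
  isIdempotentElem := by rw [IsIdempotentElem, ← mul_assoc, he]
  isSelfAdjoint := .mul_star_self e

theorem star_mul_star_mul_star_of_mul_star_mul_self {R : Type*} [Semigroup R] [StarMul R]
    {e : R} (he : e * star e * e = e) : star e * star (star e) * star e = star e := by
  conv_rhs => rw [← he]
  simp only [star_mul, star_star, mul_assoc]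

theorem add_mul_star_add_add_sub_mul_star_sub {R : Type*} [NonUnitalRing R] [StarRing R]
    (a b : R) :
    (a + b) * star (a + b) + (a - b) * star (a - b) = 2 • (a * star a + b * star b) := by
  simp only [star_add, star_sub]
  noncomm_ring

section CStarAlgebra

variable {A : Type*} [NonUnitalCStarAlgebra A]

theorem IsStarProjection.mul_mul_star_mul_le_self [PartialOrder A] [StarOrderedRing A]
    {p y : A} (hp : IsStarProjection p) (hy : ‖y‖ ≤ 1) : p * (y * star y) * p ≤ p := by
  have hp_nonneg : 0 ≤ p := by
    simpa [hp.isSelfAdjoint.star_eq, hp.isIdempotentElem.eq] using star_mul_self_nonneg p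
  have hy2 : ‖y * star y‖ ≤ 1 := by
    rw [CStarRing.norm_self_mul_star]
    nlinarith [norm_nonneg y]
  calc p * (y * star y) * p = p * (y * star y) * star p := by rw [hp.isSelfAdjoint.star_eq]
    _ ≤ ‖y * star y‖ • (p * star p) :=
      CStarAlgebra.star_right_conjugate_le_norm_smul (IsSelfAdjoint.mul_star_self y)
    _ = ‖y * star y‖ • p := by rw [hp.isSelfAdjoint.star_eq, hp.isIdempotentElem.eq]
    _ ≤ p := smul_le_of_le_one_left hp_nonneg hy2

theorem star_mul_eq_zero_of_norm_add_le_one_of_norm_sub_le_one {e x : A}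
    (he : e * star e * e = e) (h₁ : ‖e + x‖ ≤ 1) (h₂ : ‖e - x‖ ≤ 1) : star x * e = 0 := by
  let := CStarAlgebra.spectralOrder A
  have := CStarAlgebra.spectralOrderedRing A
  have hp : IsStarProjection (e * star e) := isStarProjection_mul_star_of_mul_star_mul_self he
  set p := e * star e
  have hp_self : star p = p := hp.isSelfAdjoint.star_eq
  set c := p * (x * star x) * p
  have hc_nonneg : 0 ≤ c := by
    have : c = star (star x * p) * (star x * p) := by
      simp only [c, star_mul, hp_self, star_star, mul_assoc]
    rw [this]
    exact star_mul_self_nonneg _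
  have hc_nonpos : c + c ≤ 0 := by
    have hsum : p * ((e + x) * star (e + x)) * p + p * ((e - x) * star (e - x)) * p
        = 2 • (p + c) := by
      rw [← add_mul, ← mul_add, add_mul_star_add_add_sub_mul_star_sub, mul_smul_comm,
        smul_mul_assoc, mul_add, add_mul, hp.isIdempotentElem.eq, hp.isIdempotentElem.eq]
    have := add_le_add (hp.mul_mul_star_mul_le_self h₁) (hp.mul_mul_star_mul_le_self h₂)
    rw [hsum, two_nsmul, add_add_add_comm] at this
    simpa using this
  have hc : c = 0 := le_antisymm ((le_add_of_nonneg_left hc_nonneg).trans hc_nonpos) hc_nonneg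
  have hxp : star x * p = 0 := by
    rw [← CStarRing.star_mul_self_eq_zero_iff, ← hc]
    simp only [c, star_mul, hp_self, star_star, mul_assoc]
  calc star x * e = star x * p * e := by rw [mul_assoc, he]
    _ = 0 := by rw [hxp, zero_mul]

theorem mul_star_eq_zero_of_norm_add_le_one_of_norm_sub_le_one {e x : A}
    (he : e * star e * e = e) (h₁ : ‖e + x‖ ≤ 1) (h₂ : ‖e - x‖ ≤ 1) : e * star x = 0 := by
  have h := star_mul_eq_zero_of_norm_add_le_one_of_norm_sub_le_one
    (star_mul_star_mul_star_of_mul_star_mul_self he)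
    (by rwa [← star_add, norm_star]) (by rwa [← star_sub, norm_star])
  simpa using congrArg star h

end CStarAlgebra

theorem stmt1_general {A : Type*} [NonUnitalNormedRing A] [StarRing A] [CStarRing A]
    [CompleteSpace A] [NormedSpace ℂ A] [IsScalarTower ℂ A A] [SMulCommClass ℂ A A]
    [StarModule ℂ A]
    (e x : A) (he : e * star e * e = e)
    (h1 : ‖e + x‖ = 1) (h2 : ‖e - x‖ = 1) :
    e * star x = 0 ∧ star x * e = 0 := by
  let : NonUnitalCStarAlgebra A := {}
  exact ⟨mul_star_eq_zero_of_norm_add_le_one_of_norm_sub_le_one he h1.le h2.le,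
    star_mul_eq_zero_of_norm_add_le_one_of_norm_sub_le_one he h1.le h2.le⟩

/-- If `e` is a partial isometry in a C*-algebra, `‖x‖ ≤ 1`, and `‖e + x‖ = ‖e - x‖ = 1`,
then `x` is orthogonal to `e`. -/
theorem stmt1 {A : Type*} [NonUnitalNormedRing A] [StarRing A] [CStarRing A]
    [CompleteSpace A] [NormedSpace ℂ A] [IsScalarTower ℂ A A] [SMulCommClass ℂ A A]
    [StarModule ℂ A]
    (e x : A) (he : e * star e * e = e) (hx : ‖x‖ ≤ 1)
    (h1 : ‖e + x‖ = 1) (h2 : ‖e - x‖ = 1) :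
    e * star x = 0 ∧ star x * e = 0 :=
  stmt1_general e x he h1 h2
end

section
/- Let e be a partial isometry in a C*-algebra A and let x ∈ A with ‖x‖ = 1. If ‖e + x‖ ≤ 1 and ‖e − x‖ ≤ 1, then x is orthogonal to e, i.e. e x* = 0 and x* e = 0. -/
open Unitization in
/-- Key lemma: under the hypotheses, `x * (e⋆ * e) = 0`. -/
lemma aux_orth {A : Type*} [NonUnitalNormedRing A] [StarRing A] [CStarRing A]
    [CompleteSpace A] [NormedSpace ℂ A] [IsScalarTower ℂ A A] [SMulCommClass ℂ A A]
    [StarModule ℂ A]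
    (e x : A) (he : e * star e * e = e)
    (h1 : ‖e + x‖ ≤ 1) (h2 : ‖e - x‖ ≤ 1) :
    x * (star e * e) = 0 := by
  letI : NonUnitalCStarAlgebra A := { }
  letI : PartialOrder (Unitization ℂ A) := CStarAlgebra.spectralOrder _
  haveI : StarOrderedRing (Unitization ℂ A) := CStarAlgebra.spectralOrderedRing _
  set a : Unitization ℂ A := (↑(e + x) : Unitization ℂ A) with ha
  set b : Unitization ℂ A := (↑(e - x) : Unitization ℂ A) with hb
  have hna : ‖a‖ ≤ 1 := by rwa [ha, Unitization.norm_inr]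
  have hnb : ‖b‖ ≤ 1 := by rwa [hb, Unitization.norm_inr]
  have haa : star a * a ≤ 1 := by
    rw [← CStarAlgebra.norm_le_one_iff_of_nonneg _ (star_mul_self_nonneg a)]
    calc ‖star a * a‖ = ‖a‖ * ‖a‖ := CStarRing.norm_star_mul_self
    _ ≤ 1 * 1 := mul_le_mul hna hna (norm_nonneg a) zero_le_one
    _ = 1 := one_mul 1
  have hbb : star b * b ≤ 1 := by
    rw [← CStarAlgebra.norm_le_one_iff_of_nonneg _ (star_mul_self_nonneg b)]
    calc ‖star b * b‖ = ‖b‖ * ‖b‖ := CStarRing.norm_star_mul_self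
    _ ≤ 1 * 1 := mul_le_mul hnb hnb (norm_nonneg b) zero_le_one
    _ = 1 := one_mul 1
  set E : Unitization ℂ A := (↑e : Unitization ℂ A) with hE
  set X : Unitization ℂ A := (↑x : Unitization ℂ A) with hX
  set P : Unitization ℂ A := star E * E with hP
  have hPstar : star P = P := by simp [hP, star_mul]
  have heU : E * star E * E = E := by
    rw [hE, ← Unitization.inr_star, ← Unitization.inr_mul, ← Unitization.inr_mul, he]
  have hPP : P * P = P := by
    calc P * P = star E * (E * star E * E) := by rw [hP]; noncomm_ring
    _ = P := by rw [heU, hP]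
  set T : Unitization ℂ A := star (X * P) * (X * P) with hT
  have hconj1 : star P * (star a * a) * P ≤ star P * 1 * P :=
    star_left_conjugate_le_conjugate haa P
  have hconj2 : star P * (star b * b) * P ≤ star P * 1 * P :=
    star_left_conjugate_le_conjugate hbb P
  have hsum : star P * (star a * a) * P + star P * (star b * b) * P
      ≤ star P * 1 * P + star P * 1 * P := add_le_add hconj1 hconj2
  have hlhs : star P * (star a * a) * P + star P * (star b * b) * P
      = (P + T) + (P + T) := by
    rw [ha, hb, ← hE, ← hX] at *
    rw [hPstar, hT, hP]
    have h1 : (↑(e + x) : Unitization ℂ A) = E + X := by rw [Unitization.inr_add, hE, hX]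
    have h2 : (↑(e - x) : Unitization ℂ A) = E - X := by rw [Unitization.inr_sub, hE, hX]
    rw [h1, h2]
    have expand : (star E * E) * (star (E + X) * (E + X)) * (star E * E)
        + (star E * E) * (star (E - X) * (E - X)) * (star E * E)
        = ((star E * E) * (star E * E) * (star E * E)
            + (star E * E) * (star X * X) * (star E * E))
          + ((star E * E) * (star E * E) * (star E * E)
            + (star E * E) * (star X * X) * (star E * E)) := by
      simp only [star_add, star_sub]
      noncomm_ring
    rw [expand]
    have hppp : star E * E * (star E * E) * (star E * E) = star E * E := by
      have h := hPP
      rw [hP] at h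
      rw [h, h]
    rw [hppp]
    have hcross : star E * E * (star X * X) * (star E * E)
        = star (X * (star E * E)) * (X * (star E * E)) := by
      simp only [star_mul, star_star]
      noncomm_ring
    rw [hcross]
  have hrhs : star P * 1 * P + star P * 1 * P = P + P := by
    rw [hPstar, mul_one, hPP]
  rw [hlhs, hrhs] at hsum
  have hTT : T + T ≤ 0 := by
    have := hsum
    have h' : (P + P) + (T + T) ≤ (P + P) + 0 := by
      rw [add_zero]
      calc (P + P) + (T + T) = (P + T) + (P + T) := by abel
      _ ≤ P + P := this
    exact le_of_add_le_add_left h'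
  have hT0 : (0 : Unitization ℂ A) ≤ T := star_mul_self_nonneg _
  have hTzero : T = 0 := le_antisymm (le_trans (le_add_of_nonneg_left hT0) hTT) hT0
  have hXP : X * P = 0 := by
    rw [hT] at hTzero
    exact CStarRing.star_mul_self_eq_zero_iff _ |>.mp hTzero
  have : ((x * (star e * e) : A) : Unitization ℂ A) = 0 := by
    rw [Unitization.inr_mul, Unitization.inr_mul, Unitization.inr_star, ← hE, ← hX, ← hP]
    exact hXP
  exact Unitization.inr_injective (R := ℂ) (this.trans (Unitization.inr_zero ℂ).symm)

/-- If `e` is a partial isometry in a C*-algebra, `‖x‖ = 1`, and `‖e + x‖ ≤ 1` and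
`‖e - x‖ ≤ 1`, then `x` is orthogonal to `e`. -/
theorem stmt2 {A : Type*} [NonUnitalNormedRing A] [StarRing A] [CStarRing A]
    [CompleteSpace A] [NormedSpace ℂ A] [IsScalarTower ℂ A A] [SMulCommClass ℂ A A]
    [StarModule ℂ A]
    (e x : A) (he : e * star e * e = e) (hx : ‖x‖ = 1)
    (h1 : ‖e + x‖ ≤ 1) (h2 : ‖e - x‖ ≤ 1) :
    e * star x = 0 ∧ star x * e = 0 := by
  have key1 : x * (star e * e) = 0 := aux_orth e x he h1 h2
  have he' : star e * star (star e) * star e = star e := by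
    rw [star_star]
    calc star e * e * star e = star (e * star e * e) := by simp [star_mul, mul_assoc]
    _ = star e := by rw [he]
  have h1' : ‖star e + star x‖ ≤ 1 := by
    rw [← star_add, norm_star]; exact h1
  have h2' : ‖star e - star x‖ ≤ 1 := by
    rw [← star_sub, norm_star]; exact h2
  have key2 : star x * (star (star e) * star e) = 0 := aux_orth (star e) (star x) he' h1' h2'
  rw [star_star] at key2
  constructor
  · have h : star e * e * star x = 0 := by
      calc star e * e * star x = star (x * (star e * e)) := by simp [star_mul, mul_assoc]
      _ = 0 := by rw [key1, star_zero]
    calc e * star x = e * star e * e * star x := by rw [he]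
    _ = e * (star e * e * star x) := by noncomm_ring
    _ = 0 := by rw [h, mul_zero]
  · calc star x * e = star x * (e * star e * e) := by rw [he]
    _ = star x * (e * star e) * e := by noncomm_ring
    _ = 0 := by rw [key2, zero_mul]
end

section
/- Let H be a complex Hilbert space and e ∈ K(H) a partial isometry which is not complete, i.e. the projections 1 − e e* and 1 − e* e are both nonzero (equivalently, there is a nonzero compact operator orthogonal to e). Let x ∈ K(H) be such that x is orthogonal to every rank-one partial isometry v ∈ K(H) with v orthogonal to e. Then x = e e* x e* e, i.e. x lies in the corner e e* K(H) e* e. -/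
open ContinuousLinearMap

variable {H : Type*} [NormedAddCommGroup H] [InnerProductSpace ℂ H] [CompleteSpace H]

/-- A rank-one partial isometry on `H`: the operator `x ↦ ⟪ξ, x⟫ • η` for unit
vectors `ξ, η`. -/
def IsRankOnePartialIsometry (v : H →L[ℂ] H) : Prop :=
  ∃ ξ η : H, ‖ξ‖ = 1 ∧ ‖η‖ = 1 ∧ v = (innerSL ℂ ξ).smulRight η

open scoped InnerProductSpace

lemma adjoint_rankOne (ξ η : H) :
    adjoint ((innerSL ℂ ξ).smulRight η) = (innerSL ℂ η).smulRight ξ := by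
  symm
  rw [ContinuousLinearMap.eq_adjoint_iff]
  intro u w
  simp only [smulRight_apply, innerSL_apply_apply, inner_smul_left, inner_smul_right,
    inner_conj_symm]
  ring

/-- If `e` is a non-complete compact partial isometry and `x` is a compact operator
orthogonal to every rank-one partial isometry orthogonal to `e`, then `x` lies in the
corner `e e* K(H) e* e`. -/
theorem stmt4 (e x : H →L[ℂ] H)
    (hec : IsCompactOperator (⇑e)) (hpe : e ∘L adjoint e ∘L e = e)
    (hnc₁ : ContinuousLinearMap.id ℂ H - e ∘L adjoint e ≠ 0)
    (hnc₂ : ContinuousLinearMap.id ℂ H - adjoint e ∘L e ≠ 0)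
    (hxc : IsCompactOperator (⇑x))
    (horth : ∀ v : H →L[ℂ] H, IsRankOnePartialIsometry v →
      v ∘L adjoint e = 0 → adjoint e ∘L v = 0 →
      x ∘L adjoint v = 0 ∧ adjoint v ∘L x = 0) :
    (e ∘L adjoint e) ∘L x ∘L (adjoint e ∘L e) = x := by
  -- notation
  set p : H →L[ℂ] H := e ∘L adjoint e with hp
  set q : H →L[ℂ] H := adjoint e ∘L e with hq
  -- e† = e† ∘ p  (adjoint of hpe)
  have hpe' : adjoint e ∘L p = adjoint e := by
    have h := congrArg adjoint hpe
    rw [adjoint_comp, hq, adjoint_comp, adjoint_adjoint] at h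
    rw [hp, ← comp_assoc]
    exact h
  -- pointwise versions
  have heq : ∀ ξ : H, e (q ξ) = e ξ := fun ξ => by
    conv_rhs => rw [← hpe]
    rfl
  have hep : ∀ η : H, adjoint e (p η) = adjoint e η := fun η => by
    conv_rhs => rw [← hpe']
    rfl
  have hpp : ∀ w : H, p (p w) = p w := fun w => by
    show (e ∘L adjoint e ∘L p) w = p w
    rw [hpe']
  have hqq : ∀ w : H, q (q w) = q w := fun w => by
    show (adjoint e ∘L (e ∘L q)) w = q w
    rw [show e ∘L q = e from hpe]
  -- find unit vector η₀ with p η₀ = 0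
  obtain ⟨η₀, hη₀n, hη₀⟩ : ∃ η₀ : H, ‖η₀‖ = 1 ∧ p η₀ = 0 := by
    have : ∃ u : H, (ContinuousLinearMap.id ℂ H - p) u ≠ 0 := by
      by_contra h
      push_neg at h
      exact hnc₁ (ContinuousLinearMap.ext fun u => h u)
    obtain ⟨u, hu⟩ := this
    set w := u - p u with hw
    have hwne : w ≠ 0 := by simpa [hw, sub_apply] using hu
    refine ⟨‖w‖⁻¹ • w, norm_smul_inv_norm hwne, ?_⟩
    have : p w = 0 := by simp [hw, map_sub, hpp]
    simp [map_smul, this]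
  -- find unit vector ξ₀ with q ξ₀ = 0
  obtain ⟨ξ₀, hξ₀n, hξ₀⟩ : ∃ ξ₀ : H, ‖ξ₀‖ = 1 ∧ q ξ₀ = 0 := by
    have : ∃ u : H, (ContinuousLinearMap.id ℂ H - q) u ≠ 0 := by
      by_contra h
      push_neg at h
      exact hnc₂ (ContinuousLinearMap.ext fun u => h u)
    obtain ⟨u, hu⟩ := this
    set w := u - q u with hw
    have hwne : w ≠ 0 := by simpa [hw, sub_apply] using hu
    refine ⟨‖w‖⁻¹ • w, norm_smul_inv_norm hwne, ?_⟩
    have : q w = 0 := by simp [hw, map_sub, hqq]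
    simp [map_smul, this]
  have hη₀e : adjoint e η₀ = 0 := by rw [← hep η₀, hη₀, map_zero]
  have hξ₀e : e ξ₀ = 0 := by rw [← heq ξ₀, hξ₀, map_zero]
  -- Claim A : q ξ = 0 → x ξ = 0
  have claimA : ∀ ξ : H, q ξ = 0 → x ξ = 0 := by
    intro ξ hξ
    rcases eq_or_ne ξ 0 with rfl | hne
    · simp
    set ξ' := ‖ξ‖⁻¹ • ξ with hξ'
    have hξ'q : q ξ' = 0 := by simp [hξ', map_smul, hξ]
    have hξ'e : e ξ' = 0 := by rw [← heq ξ', hξ'q, map_zero]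
    set v : H →L[ℂ] H := (innerSL ℂ ξ').smulRight η₀ with hv
    have h1 : v ∘L adjoint e = 0 := by
      ext u
      simp only [comp_apply, hv, smulRight_apply, innerSL_apply_apply, zero_apply]
      rw [adjoint_inner_right, hξ'e]
      simp
    have h2 : adjoint e ∘L v = 0 := by
      ext u
      simp [hv, comp_apply, map_smul, hη₀e]
    obtain ⟨hx1, _⟩ := horth v ⟨ξ', η₀, norm_smul_inv_norm hne, hη₀n, rfl⟩ h1 h2
    have h3 := ContinuousLinearMap.ext_iff.mp hx1 η₀
    simp only [comp_apply, hv, adjoint_rankOne, smulRight_apply, innerSL_apply_apply,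
      zero_apply] at h3
    rw [inner_self_eq_norm_sq_to_K, hη₀n] at h3
    norm_num at h3
    rw [hξ', map_smul_of_tower] at h3
    rcases smul_eq_zero.mp h3 with h | h
    · exact absurd h (inv_ne_zero (norm_ne_zero_iff.mpr hne))
    · exact h
  -- Claim B : p η = 0 → ∀ u, ⟪η, x u⟫ = 0
  have claimB : ∀ η : H, p η = 0 → ∀ u : H, ⟪η, x u⟫_ℂ = 0 := by
    intro η hη u
    rcases eq_or_ne η 0 with rfl | hne
    · simp
    set η' := ‖η‖⁻¹ • η with hη'
    have hη'p : p η' = 0 := by simp [hη', map_smul, hη]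
    have hη'e : adjoint e η' = 0 := by rw [← hep η', hη'p, map_zero]
    set v : H →L[ℂ] H := (innerSL ℂ ξ₀).smulRight η' with hv
    have h1 : v ∘L adjoint e = 0 := by
      ext w
      simp only [comp_apply, hv, smulRight_apply, innerSL_apply_apply, zero_apply]
      rw [adjoint_inner_right, hξ₀e]
      simp
    have h2 : adjoint e ∘L v = 0 := by
      ext w
      simp [hv, comp_apply, map_smul, hη'e]
    obtain ⟨_, hx2⟩ := horth v ⟨ξ₀, η', hξ₀n, norm_smul_inv_norm hne, rfl⟩ h1 h2
    have h3 := ContinuousLinearMap.ext_iff.mp hx2 u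
    simp only [comp_apply, hv, adjoint_rankOne, smulRight_apply, innerSL_apply_apply,
      zero_apply] at h3
    have hξ₀ne : ξ₀ ≠ 0 := by
      intro h; rw [h, norm_zero] at hξ₀n; norm_num at hξ₀n
    have hin : ⟪η', x u⟫_ℂ = 0 := by
      rcases smul_eq_zero.mp h3 with h | h
      · exact h
      · exact absurd h hξ₀ne
    rw [hη', RCLike.real_smul_eq_coe_smul (K := ℂ), inner_smul_left] at hin
    simp only [RCLike.conj_ofReal] at hin
    rcases mul_eq_zero.mp hin with h | h
    · exact absurd (RCLike.ofReal_eq_zero.mp h)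
        (inv_ne_zero (norm_ne_zero_iff.mpr hne))
    · exact h
  -- conclude
  ext u
  simp only [comp_apply]
  have hxq : x (q u) = x u := by
    have : x (u - q u) = 0 := claimA _ (by simp [map_sub, hqq])
    rw [map_sub, sub_eq_zero] at this
    exact this.symm
  rw [hxq]
  set w := x u - p (x u) with hwdef
  have hpw : p w = 0 := by simp [hwdef, map_sub, hpp]
  have h1 : ⟪w, x u⟫_ℂ = 0 := claimB w hpw u
  have h2 : ⟪w, p (x u)⟫_ℂ = 0 := by
    have hew : adjoint e w = 0 := by
      have h0 : ⟪adjoint e w, adjoint e w⟫_ℂ = 0 := by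
        rw [adjoint_inner_left]
        show ⟪w, p w⟫_ℂ = 0
        rw [hpw, inner_zero_right]
      exact inner_self_eq_zero.mp h0
    show ⟪w, e (adjoint e (x u))⟫_ℂ = 0
    rw [← adjoint_inner_left, hew, inner_zero_left]
  have : ⟪w, w⟫_ℂ = 0 := by rw [hwdef, inner_sub_right, h1, h2, sub_zero]
  have hw0 : w = 0 := inner_self_eq_zero.mp this
  exact (sub_eq_zero.mp hw0).symm
end

section
/- Let e and u be orthogonal partial isometries in a C*-algebra A. Then e + u is a partial isometry, and an element x ∈ A satisfies (e+u)(e+u)* x (e+u)*(e+u) = x if and only if x decomposes as x = x₂ₑ + x₂ᵤ + x₁, where e e* x₂ₑ e* e = x₂ₑ, u u* x₂ᵤ u* u = x₂ᵤ, and x₁ satisfies e e* x₁ u* u + u u* x₁ e* e = x₁ with e e* x₁ e* e = 0 = u u* x₁ u* u. -/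
private theorem peirce_aux {A : Type*} [NonUnitalRing A]
    (p q P Q : A)
    (hpp : p * p = p) (hqq : q * q = q) (hPP : P * P = P) (hQQ : Q * Q = Q)
    (hpq : p * q = 0) (hqp : q * p = 0) (hPQ : P * Q = 0) (hQP : Q * P = 0)
    (x : A) :
    ((p + q) * x * (P + Q) = x ↔
      ∃ a b c : A, x = a + b + c ∧ p * a * P = a ∧ q * b * Q = b ∧
        p * c * Q + q * c * P = c ∧ p * c * P = 0 ∧ q * c * Q = 0) := by
  have hpp' : ∀ y : A, p * (p * y) = p * y := fun y => by rw [← mul_assoc, hpp]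
  have hqq' : ∀ y : A, q * (q * y) = q * y := fun y => by rw [← mul_assoc, hqq]
  have hpq' : ∀ y : A, p * (q * y) = 0 := fun y => by rw [← mul_assoc, hpq, zero_mul]
  have hqp' : ∀ y : A, q * (p * y) = 0 := fun y => by rw [← mul_assoc, hqp, zero_mul]
  constructor
  · intro hx
    refine ⟨p * x * P, q * x * Q, p * x * Q + q * x * P, ?_, ?_, ?_, ?_, ?_, ?_⟩
    · conv_lhs => rw [← hx]
      simp only [add_mul, mul_add]; abel
    · simp only [mul_assoc, hPP, hpp']
    · simp only [mul_assoc, hQQ, hqq']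
    · simp only [mul_add, add_mul, mul_assoc, hPP, hQQ, hPQ, hQP, hpp', hqq',
        hpq', hqp', mul_zero, zero_add, add_zero]
    · simp only [mul_add, add_mul, mul_assoc, hPP, hQP, hpp', hpq',
        mul_zero, zero_add, add_zero]
    · simp only [mul_add, add_mul, mul_assoc, hQQ, hPQ, hqq', hqp',
        mul_zero, zero_add, add_zero]
  · rintro ⟨a, b, c, rfl, ha, hb, hc, hc1, hc2⟩
    have ha1 : p * a * Q = 0 := by
      rw [← ha]; simp only [mul_assoc, hPQ, mul_zero, hpp']
    have ha2 : q * a * P = 0 := by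
      rw [← ha]; simp only [mul_assoc, hqp', zero_mul, mul_zero]
    have ha3 : q * a * Q = 0 := by
      rw [← ha]; simp only [mul_assoc, hqp', zero_mul, mul_zero]
    have hb1 : p * b * P = 0 := by
      rw [← hb]; simp only [mul_assoc, hpq', zero_mul, mul_zero]
    have hb2 : p * b * Q = 0 := by
      rw [← hb]; simp only [mul_assoc, hpq', zero_mul, mul_zero]
    have hb3 : q * b * P = 0 := by
      rw [← hb]; simp only [mul_assoc, hQP, mul_zero, hqq']
    have expand : (p + q) * (a + b + c) * (P + Q) =
        (p * a * P + p * a * Q + q * a * P + q * a * Q) +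
        (p * b * P + p * b * Q + q * b * P + q * b * Q) +
        (p * c * P + p * c * Q + q * c * P + q * c * Q) := by
      simp only [add_mul, mul_add]; abel
    rw [expand, ha, ha1, ha2, ha3, hb1, hb, hb2, hb3, hc1, hc2]
    simp only [add_zero, zero_add]
    rw [hc]

/-- If `e` and `u` are orthogonal partial isometries in a C*-algebra, then `e + u` is a
partial isometry and the Peirce-2 space of `e + u` decomposes as
`E₂(e) ⊕ E₂(u) ⊕ (E₁(e) ∩ E₁(u))`, written out in C*-algebra terms. -/
theorem stmt6 {A : Type*} [NonUnitalNormedRing A] [StarRing A] [CStarRing A]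
    [CompleteSpace A] [NormedSpace ℂ A] [IsScalarTower ℂ A A] [SMulCommClass ℂ A A]
    [StarModule ℂ A]
    (e u : A) (he : e * star e * e = e) (hu : u * star u * u = u)
    (h1 : e * star u = 0) (h2 : star u * e = 0) :
    (e + u) * star (e + u) * (e + u) = e + u ∧
      ∀ x : A,
        ((e + u) * star (e + u) * x * (star (e + u) * (e + u)) = x ↔
          ∃ x₂ₑ x₂ᵤ x₁ : A,
            x = x₂ₑ + x₂ᵤ + x₁ ∧
            e * star e * x₂ₑ * (star e * e) = x₂ₑ ∧
            u * star u * x₂ᵤ * (star u * u) = x₂ᵤ ∧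
            e * star e * x₁ * (star u * u) + u * star u * x₁ * (star e * e) = x₁ ∧
            e * star e * x₁ * (star e * e) = 0 ∧
            u * star u * x₁ * (star u * u) = 0) := by
  have h3 : u * star e = 0 := by simpa using congrArg star h1
  have h4 : star e * u = 0 := by simpa using congrArg star h2
  have he' : e * (star e * e) = e := by rw [← mul_assoc]; exact he
  have hu' : u * (star u * u) = u := by rw [← mul_assoc]; exact hu
  have hse : star e * (e * star e) = star e := by
    simpa [mul_assoc] using congrArg star he
  have hsu : star u * (u * star u) = star u := by
    simpa [mul_assoc] using congrArg star hu
  have hpp : (e * star e) * (e * star e) = e * star e := by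
    rw [mul_assoc, hse]
  have hqq : (u * star u) * (u * star u) = u * star u := by
    rw [mul_assoc, hsu]
  have hPP : (star e * e) * (star e * e) = star e * e := by
    rw [mul_assoc, he']
  have hQQ : (star u * u) * (star u * u) = star u * u := by
    rw [mul_assoc, hu']
  have hpq : (e * star e) * (u * star u) = 0 := by
    rw [mul_assoc, ← mul_assoc (star e) u, h4, zero_mul, mul_zero]
  have hqp : (u * star u) * (e * star e) = 0 := by
    rw [mul_assoc, ← mul_assoc (star u) e, h2, zero_mul, mul_zero]
  have hPQ : (star e * e) * (star u * u) = 0 := by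
    rw [mul_assoc, ← mul_assoc e (star u), h1, zero_mul, mul_zero]
  have hQP : (star u * u) * (star e * e) = 0 := by
    rw [mul_assoc, ← mul_assoc u (star e), h3, zero_mul, mul_zero]
  have hS1 : (e + u) * star (e + u) = e * star e + u * star u := by
    simp [star_add, mul_add, add_mul, h1, h3]
  have hS2 : star (e + u) * (e + u) = star e * e + star u * u := by
    simp [star_add, mul_add, add_mul, h2, h4]
  constructor
  · rw [hS1]
    simp only [add_mul, mul_add, mul_assoc, he', hu', h2, h4, mul_zero,
      add_zero, zero_add]
  · intro x
    rw [hS1, hS2]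
    exact peirce_aux (e * star e) (u * star u) (star e * e) (star u * u)
      hpp hqq hPP hQQ hpq hqp hPQ hQP x
end

section
/- Let X and Y be real Banach spaces and Δ : S(X) → S(Y) a surjective isometry between the unit spheres. Then for any x ∈ S(X), the image Δ(−x) has norm 1, and Δ maps each maximal proper norm-closed face of the unit ball of X contained in S(X) onto an intersection of maximal faces of the unit ball of Y; in particular, if F ⊆ S(X) is a maximal convex subset of S(X), then Δ(F) is a maximal convex subset of S(Y). -/
/-!
Call the points of the unit sphere at distance `2` from every point of a set `A` its antipodes.
For a maximal convex subset `M` of the sphere the antipodes of `M` are exactly `-M`, because a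
point at distance `2` from all of `M` can be adjoined to `M` without leaving the sphere. Antipodes
are defined by distances between points of the sphere, so `Δ` carries them over.

The key point is that the convex hull of the image of a convex subset of the sphere still lies in
the sphere: if `c = ∑ tᵢ xᵢ` lies in the sphere and `D` is a maximal convex set containing `Δ c`,
then a point at distance `2` from `c` is at distance `2` from every `xᵢ` with `tᵢ ≠ 0`, so each
such `Δ xᵢ` lies among the antipodes of the antipodes of `D`, which is `D`.

Hence `Δ '' F ⊆ G` and `Δ '' (-F) ⊆ H` for maximal convex sets `G`, `H`; passing to antipodes
gives `-H ⊆ Δ '' F ⊆ G`, so `-H = G` by maximality, and `Δ '' F = G`.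
-/

open Set Metric Pointwise

theorem exists_maximal_convex_superset {𝕜 E : Type*} [Semiring 𝕜] [PartialOrder 𝕜]
    [AddCommMonoid E] [Module 𝕜 E] {S C : Set E} (hCS : C ⊆ S) (hC : Convex 𝕜 C) :
    ∃ M, C ⊆ M ∧ Maximal (fun B => B ⊆ S ∧ Convex 𝕜 B) M :=
  zorn_subset_nonempty {B | B ⊆ S ∧ Convex 𝕜 B}
    (fun c hcS hc _ => ⟨⋃₀ c, ⟨sUnion_subset fun _ hs => (hcS hs).1,
      hc.directedOn.convex_sUnion fun _ hs => (hcS hs).2⟩, fun _ => subset_sUnion_of_mem⟩)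
    C ⟨hCS, hC⟩

theorem norm_eq_of_norm_sum_smul_eq {ι E : Type*} [Fintype ι] [SeminormedAddCommGroup E]
    [NormedSpace ℝ E] {t : ι → ℝ} {v : ι → E} {r : ℝ} (ht₀ : ∀ i, 0 ≤ t i)
    (ht₁ : ∑ i, t i = 1) (hv : ∀ i, ‖v i‖ ≤ r) (hsum : ‖∑ i, t i • v i‖ = r) {i : ι}
    (hti : t i ≠ 0) : ‖v i‖ = r := by
  by_contra hne
  have hlt : ∑ j, t j * ‖v j‖ < ∑ j, t j * r :=
    Finset.sum_lt_sum (fun j _ => mul_le_mul_of_nonneg_left (hv j) (ht₀ j))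
      ⟨i, Finset.mem_univ i, mul_lt_mul_of_pos_left ((hv i).lt_of_ne hne) ((ht₀ i).lt_of_ne' hti)⟩
  have hle : r ≤ ∑ j, t j * ‖v j‖ := by
    calc r = ‖∑ j, t j • v j‖ := hsum.symm
      _ ≤ ∑ j, ‖t j • v j‖ := norm_sum_le _ _
      _ = ∑ j, t j * ‖v j‖ := by simp only [norm_smul, Real.norm_of_nonneg (ht₀ _)]
  rw [← Finset.sum_mul, ht₁, one_mul] at hlt
  linarith

theorem setOf_norm_eq_eq_sphere {E : Type*} [SeminormedAddGroup E] (r : ℝ) :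
    {x : E | ‖x‖ = r} = sphere 0 r := by
  ext; simp

section Sphere

variable {E : Type*} [NormedAddCommGroup E]

def antipodes (A : Set E) : Set E :=
  {z | z ∈ sphere 0 1 ∧ ∀ a ∈ A, ‖z - a‖ = 2}

theorem antipodes_anti {A B : Set E} (h : A ⊆ B) : antipodes B ⊆ antipodes A :=
  fun _ hz => ⟨hz.1, fun a ha => hz.2 a (h ha)⟩

variable [NormedSpace ℝ E]

theorem segment_subset_sphere_of_norm_add_eq_two {p q : E} (hp : ‖p‖ = 1) (hq : ‖q‖ = 1)
    (hpq : ‖p + q‖ = 2) : segment ℝ p q ⊆ sphere 0 1 := by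
  rintro _ ⟨a, b, ha, hb, hab, rfl⟩
  have hle : ∀ u v : ℝ, 0 ≤ u → 0 ≤ v → u + v = 1 → ‖u • p + v • q‖ ≤ 1 := fun u v hu hv huv =>
    calc ‖u • p + v • q‖ ≤ ‖u • p‖ + ‖v • q‖ := norm_add_le _ _
      _ = 1 := by rw [norm_smul, norm_smul, hp, hq, Real.norm_of_nonneg hu,
          Real.norm_of_nonneg hv, mul_one, mul_one, huv]
  -- `p + q` splits into the point and its mirror image in the segment, both of norm `≤ 1`
  have hsplit : p + q = (a • p + b • q) + (b • p + a • q) := by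
    calc p + q = (a + b) • p + (a + b) • q := by rw [hab, one_smul, one_smul]
      _ = _ := by module
  have h := norm_add_le (a • p + b • q) (b • p + a • q)
  rw [← hsplit, hpq] at h
  rw [mem_sphere_zero_iff_norm]
  linarith [hle a b ha hb hab, hle b a hb ha (by linarith)]

def IsMaxConvexInSphere (M : Set E) : Prop :=
  Maximal (fun B : Set E => B ⊆ sphere 0 1 ∧ Convex ℝ B) M

namespace IsMaxConvexInSphere

variable {M : Set E}

theorem subset_sphere (hM : IsMaxConvexInSphere M) : M ⊆ sphere 0 1 := hM.prop.1

theorem convex (hM : IsMaxConvexInSphere M) : Convex ℝ M := hM.prop.2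

theorem eq_of_subset (hM : IsMaxConvexInSphere M) {B : Set E} (hBS : B ⊆ sphere 0 1)
    (hB : Convex ℝ B) (hMB : M ⊆ B) : M = B :=
  Maximal.eq_of_subset hM ⟨hBS, hB⟩ hMB

theorem neg (hM : IsMaxConvexInSphere M) : IsMaxConvexInSphere (-M) := by
  refine ⟨⟨?_, hM.convex.neg⟩, fun B hB hMB => ?_⟩
  · rw [Set.neg_subset, neg_sphere, neg_zero]
    exact hM.subset_sphere
  · rw [Set.neg_subset] at hMB
    have hBS : -B ⊆ sphere 0 1 := by rw [Set.neg_subset, neg_sphere, neg_zero]; exact hB.1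
    rw [hM.eq_of_subset hBS hB.2.neg hMB, neg_neg]

theorem mem_of_forall_norm_add_eq_two (hM : IsMaxConvexInSphere M) {z : E} (hz : ‖z‖ = 1)
    (h : ∀ d ∈ M, ‖z + d‖ = 2) : z ∈ M := by
  have hull : convexHull ℝ (insert z M) ⊆ sphere 0 1 := by
    rcases M.eq_empty_or_nonempty with rfl | hne
    · simpa [convexHull_singleton] using hz
    · rw [convexHull_insert hne, hM.convex.convexHull_eq]
      intro x hx
      obtain ⟨_, rfl, d, hd, hx⟩ := mem_convexJoin.1 hx
      exact segment_subset_sphere_of_norm_add_eq_two hz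
        (mem_sphere_zero_iff_norm.1 (hM.subset_sphere hd)) (h d hd) hx
  rw [hM.eq_of_subset hull (convex_convexHull ℝ _)
    ((subset_insert z M).trans (subset_convexHull ℝ _))]
  exact subset_convexHull ℝ _ (mem_insert z M)

theorem antipodes_eq_neg (hM : IsMaxConvexInSphere M) : antipodes M = -M := by
  ext z
  constructor
  · rintro ⟨hz, hzM⟩
    refine hM.mem_of_forall_norm_add_eq_two (by simpa using hz) fun d hd => ?_
    rw [neg_add_eq_sub, norm_sub_rev, hzM d hd]
  · intro hz
    refine ⟨by simpa using hM.subset_sphere hz, fun d hd => ?_⟩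
    have hmid := hM.subset_sphere (hM.convex hz hd (by norm_num : (0 : ℝ) ≤ 1 / 2)
      (by norm_num : (0 : ℝ) ≤ 1 / 2) (by norm_num))
    have : (1 / 2 : ℝ) • -z + (1 / 2 : ℝ) • d = (1 / 2 : ℝ) • -(z - d) := by module
    rw [this, mem_sphere_zero_iff_norm, norm_smul, norm_neg, Real.norm_of_nonneg (by norm_num)]
      at hmid
    linarith

theorem antipodes_neg (hM : IsMaxConvexInSphere M) : antipodes (-M) = M := by
  rw [hM.neg.antipodes_eq_neg, neg_neg]

end IsMaxConvexInSphere

variable {X Y : Type*} [NormedAddCommGroup X] [NormedAddCommGroup Y]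

structure IsSphereIsometry (Δ : X → Y) : Prop where
  mapsTo : MapsTo Δ (sphere 0 1) (sphere 0 1)
  surjOn : SurjOn Δ (sphere 0 1) (sphere 0 1)
  norm_sub_eq : ∀ x ∈ sphere (0 : X) 1, ∀ y ∈ sphere (0 : X) 1, ‖Δ x - Δ y‖ = ‖x - y‖

namespace IsSphereIsometry

variable {Δ : X → Y}

theorem image_antipodes (hΔ : IsSphereIsometry Δ) {A : Set X} (hA : A ⊆ sphere 0 1) :
    Δ '' antipodes A = antipodes (Δ '' A) := by
  ext ζ
  constructor
  · rintro ⟨z, ⟨hz, hzA⟩, rfl⟩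
    refine ⟨hΔ.mapsTo hz, ?_⟩
    rintro _ ⟨a, ha, rfl⟩
    rw [hΔ.norm_sub_eq z hz a (hA ha), hzA a ha]
  · rintro ⟨hζ, hζA⟩
    obtain ⟨z, hz, rfl⟩ := hΔ.surjOn hζ
    refine ⟨z, ⟨hz, fun a ha => ?_⟩, rfl⟩
    rw [← hΔ.norm_sub_eq z hz a (hA ha), hζA _ (mem_image_of_mem Δ ha)]

variable [NormedSpace ℝ X] [NormedSpace ℝ Y]

theorem sum_smul_mem_sphere (hΔ : IsSphereIsometry Δ) {ι : Type*} [Fintype ι] (t : ι → ℝ)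
    (x : ι → X) (ht₀ : ∀ i, 0 ≤ t i) (ht₁ : ∑ i, t i = 1) (hx : ∀ i, x i ∈ sphere 0 1)
    (hc : ∑ i, t i • x i ∈ sphere 0 1) : ∑ i, t i • Δ (x i) ∈ sphere 0 1 := by
  set c := ∑ i, t i • x i
  obtain ⟨D, hcD, hD⟩ : ∃ D, {Δ c} ⊆ D ∧ IsMaxConvexInSphere D :=
    exists_maximal_convex_superset (singleton_subset_iff.2 (hΔ.mapsTo hc)) (convex_singleton _)
  have hmem : ∀ i, t i ≠ 0 → Δ (x i) ∈ D := by
    intro i hti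
    rw [← hD.antipodes_neg, ← hD.antipodes_eq_neg]
    refine ⟨hΔ.mapsTo (hx i), ?_⟩
    rintro ζ ⟨hζ, hζD⟩
    obtain ⟨q, hq, rfl⟩ := hΔ.surjOn hζ
    have hqc : ‖q - c‖ = 2 := by
      rw [← hΔ.norm_sub_eq q hq c hc, hζD _ (singleton_subset_iff.1 hcD)]
    have hqx : ‖q - x i‖ = 2 := by
      refine norm_eq_of_norm_sum_smul_eq (v := fun j => q - x j) ht₀ ht₁ (fun j => ?_) ?_ hti
      · calc ‖q - x j‖ ≤ ‖q‖ + ‖x j‖ := norm_sub_le _ _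
          _ = 2 := by rw [mem_sphere_zero_iff_norm.1 hq, mem_sphere_zero_iff_norm.1 (hx j)]; norm_num
      · simpa [c, smul_sub, Finset.sum_sub_distrib, ← Finset.sum_smul, ht₁] using hqc
    rw [hΔ.norm_sub_eq _ (hx i) q hq, norm_sub_rev, hqx]
  rw [← Finset.sum_filter_of_ne (p := fun i => t i ≠ 0) fun i _ h => left_ne_zero_of_smul h]
  refine hD.subset_sphere (hD.convex.sum_mem (fun i _ => ht₀ i) ?_ fun i hi => ?_)
  · rw [Finset.sum_filter_ne_zero, ht₁]
  · exact hmem i (Finset.mem_filter.1 hi).2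

theorem convexHull_image_subset_sphere (hΔ : IsSphereIsometry Δ) {C : Set X}
    (hCS : C ⊆ sphere 0 1) (hC : Convex ℝ C) : convexHull ℝ (Δ '' C) ⊆ sphere 0 1 := by
  intro y hy
  obtain ⟨ι, _, t, z, ht₀, ht₁, hz, rfl⟩ := mem_convexHull_iff_exists_fintype.1 hy
  choose x hxC hxz using hz
  simp only [← hxz]
  exact hΔ.sum_smul_mem_sphere t x ht₀ ht₁ (fun i => hCS (hxC i))
    (hCS (hC.sum_mem (fun i _ => ht₀ i) ht₁ fun i _ => hxC i))

theorem exists_isMaxConvexInSphere_image_subset (hΔ : IsSphereIsometry Δ) {C : Set X}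
    (hCS : C ⊆ sphere 0 1) (hC : Convex ℝ C) :
    ∃ G, IsMaxConvexInSphere G ∧ Δ '' C ⊆ G := by
  obtain ⟨G, hG, hGmax⟩ := exists_maximal_convex_superset
    (hΔ.convexHull_image_subset_sphere hCS hC) (convex_convexHull ℝ _)
  exact ⟨G, hGmax, (subset_convexHull ℝ _).trans hG⟩

theorem neg_subset_image_neg (hΔ : IsSphereIsometry Δ) {F : Set X} {G : Set Y}
    (hF : IsMaxConvexInSphere F) (hG : IsMaxConvexInSphere G) (hFG : Δ '' F ⊆ G) :
    -G ⊆ Δ '' (-F) :=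
  calc -G = antipodes G := hG.antipodes_eq_neg.symm
    _ ⊆ antipodes (Δ '' F) := antipodes_anti hFG
    _ = Δ '' antipodes F := (hΔ.image_antipodes hF.subset_sphere).symm
    _ = Δ '' (-F) := by rw [hF.antipodes_eq_neg]

theorem isMaxConvexInSphere_image (hΔ : IsSphereIsometry Δ) {F : Set X}
    (hF : IsMaxConvexInSphere F) : IsMaxConvexInSphere (Δ '' F) := by
  obtain ⟨G, hG, hFG⟩ := hΔ.exists_isMaxConvexInSphere_image_subset hF.subset_sphere hF.convex
  obtain ⟨H, hH, hFH⟩ :=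
    hΔ.exists_isMaxConvexInSphere_image_subset hF.neg.subset_sphere hF.neg.convex
  have hHF : -H ⊆ Δ '' F := by simpa using hΔ.neg_subset_image_neg hF.neg hH hFH
  have hHG : -H = G := hH.neg.eq_of_subset hG.subset_sphere hG.convex (hHF.trans hFG)
  rwa [hFG.antisymm (hHG ▸ hHF)]

end IsSphereIsometry

end Sphere

theorem stmt9_general {X Y : Type*} [NormedAddCommGroup X] [NormedSpace ℝ X]
    [NormedAddCommGroup Y] [NormedSpace ℝ Y]
    (Δ : X → Y)
    (hmap : ∀ x : X, ‖x‖ = 1 → ‖Δ x‖ = 1)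
    (hsurj : ∀ y : Y, ‖y‖ = 1 → ∃ x : X, ‖x‖ = 1 ∧ Δ x = y)
    (hiso : ∀ x y : X, ‖x‖ = 1 → ‖y‖ = 1 → ‖Δ x - Δ y‖ = ‖x - y‖) :
    (∀ x : X, ‖x‖ = 1 → ‖Δ (-x)‖ = 1) ∧
    (∀ F : Set X, F ⊆ {x : X | ‖x‖ = 1} → Convex ℝ F →
      (∀ G : Set X, G ⊆ {x : X | ‖x‖ = 1} → Convex ℝ G → F ⊆ G → F = G) →
      (Δ '' F ⊆ {y : Y | ‖y‖ = 1} ∧ Convex ℝ (Δ '' F) ∧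
        ∀ G : Set Y, G ⊆ {y : Y | ‖y‖ = 1} → Convex ℝ G → Δ '' F ⊆ G → Δ '' F = G)) := by
  have hΔ : IsSphereIsometry Δ := by
    refine ⟨fun x hx => ?_, fun y hy => ?_, fun x hx y hy => ?_⟩
    · simpa using hmap x (by simpa using hx)
    · obtain ⟨x, hx, rfl⟩ := hsurj y (by simpa using hy)
      exact ⟨x, by simpa using hx, rfl⟩
    · exact hiso x y (by simpa using hx) (by simpa using hy)
  refine ⟨fun x hx => hmap (-x) (by rwa [norm_neg]), fun F hFS hFc hFmax => ?_⟩
  simp only [setOf_norm_eq_eq_sphere] at hFS hFmax ⊢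
  have hF : IsMaxConvexInSphere F := ⟨⟨hFS, hFc⟩, fun G hG hFG => (hFmax G hG.1 hG.2 hFG).ge⟩
  have hΔF := hΔ.isMaxConvexInSphere_image hF
  exact ⟨hΔF.subset_sphere, hΔF.convex, fun G hGS hGc hFG => hΔF.eq_of_subset hGS hGc hFG⟩

/-- A surjective isometry `Δ` between the unit spheres of two real Banach spaces maps
`-x` to a point of the unit sphere for any `x` in the sphere, and maps each maximal
convex subset of `S(X)` onto a maximal convex subset of `S(Y)`. -/
theorem stmt9 {X Y : Type*} [NormedAddCommGroup X] [NormedSpace ℝ X] [CompleteSpace X]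
    [NormedAddCommGroup Y] [NormedSpace ℝ Y] [CompleteSpace Y]
    (Δ : X → Y)
    (hmap : ∀ x : X, ‖x‖ = 1 → ‖Δ x‖ = 1)
    (hsurj : ∀ y : Y, ‖y‖ = 1 → ∃ x : X, ‖x‖ = 1 ∧ Δ x = y)
    (hiso : ∀ x y : X, ‖x‖ = 1 → ‖y‖ = 1 → ‖Δ x - Δ y‖ = ‖x - y‖) :
    (∀ x : X, ‖x‖ = 1 → ‖Δ (-x)‖ = 1) ∧
    (∀ F : Set X, F ⊆ {x : X | ‖x‖ = 1} → Convex ℝ F →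
      (∀ G : Set X, G ⊆ {x : X | ‖x‖ = 1} → Convex ℝ G → F ⊆ G → F = G) →
      (Δ '' F ⊆ {y : Y | ‖y‖ = 1} ∧ Convex ℝ (Δ '' F) ∧
        ∀ G : Set Y, G ⊆ {y : Y | ‖y‖ = 1} → Convex ℝ G → Δ '' F ⊆ G → Δ '' F = G)) :=
  stmt9_general Δ hmap hsurj hiso
end

section
/- Let (Xᵢ)_{i∈I} be a family of Banach spaces and X their c₀-sum. Suppose that for all x, y ∈ X and ε > 0 there exist a finite F ⊆ I, closed subspaces Zᵢ ⊆ Xᵢ and aᵢ, bᵢ ∈ Zᵢ (i ∈ F) such that: (1) each closed unit ball B_{Zᵢ} equals {xᵢ ∈ B_{Xᵢ} : ‖xᵢ − mᵢ‖ ≤ 1 for all mᵢ ∈ Mᵢ} for some set Mᵢ ⊆ B_{Xᵢ}; (2) ‖x − (aᵢ)_{i∈F}‖ < ε and ‖y − (bᵢ)_{i∈F}‖ < ε; (3) the closed unit ball of the ℓ∞-sum of (Zᵢ)_{i∈F} satisfies the strong Mankiewicz property. Then every surjective isometry from the closed unit ball of X onto a convex subset of a normed space is affine. -/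
open scoped ENNReal

noncomputable section

instance : Fact ((1 : ℝ≥0∞) ≤ ∞) := ⟨le_top⟩

/-- A convex set `K` in a normed space satisfies the strong Mankiewicz property if every
surjective isometry from `K` onto a convex subset of a normed space is affine. -/
def StrongMankiewicz {W : Type*} [NormedAddCommGroup W] [NormedSpace ℝ W]
    (K : Set W) : Prop :=
  ∀ (Y : Type) [NormedAddCommGroup Y] [NormedSpace ℝ Y] (L : Set Y), Convex ℝ L →
    ∀ Δ : W → Y, (∀ a ∈ K, ∀ b ∈ K, ‖Δ a - Δ b‖ = ‖a - b‖) → Δ '' K = L →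
      ∀ a ∈ K, ∀ b ∈ K, ∀ t ∈ Set.Icc (0 : ℝ) 1,
        Δ (t • a + (1 - t) • b) = t • Δ a + (1 - t) • Δ b

/-- An element of the `ℓ∞`-sum lies in the `c₀`-sum if its coordinates vanish at
infinity. -/
def MemC0 {I : Type} {E : I → Type} [∀ i, NormedAddCommGroup (E i)]
    (x : lp E ∞) : Prop :=
  ∀ ε > (0 : ℝ), {i : I | ε ≤ ‖x i‖}.Finite

/-!
Fix `a, b` in the unit ball `B` of the `c₀`-sum, a parameter `t` and `ε > 0`, and take `F`, `Zᵢ`,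
`Mᵢ` from the hypothesis. The unit ball `K` of the `ℓ∞`-sum of `(Zᵢ)_{i ∈ F}` is cut out of `B` by
unit balls centred at points of `B`: the points `single i m` with `m ∈ Mᵢ` for `i ∈ F`, and
`single i c` with `‖c‖ ≤ 1` for `i ∉ F`. An isometry `Δ` of `B` therefore maps `K` onto the
intersection of the convex set `Δ(B)` with the unit balls around the images of these centres, a
convex set, so `Δ` is affine on `K` by the strong Mankiewicz property of `K`. Rescaled
approximants of `a` and `b` lie in `K` and are `2ε`-close to `a`, `b`, so `Δ` fails to be affine
at `(a, b, t)` by at most `4ε`.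
-/

open Metric Filter Topology

section NormedSpace

variable {V : Type*} [NormedAddCommGroup V] [NormedSpace ℝ V]

theorem eq_zero_of_forall_norm_sub_le_one {v : V} (h : ∀ c : V, ‖c‖ ≤ 1 → ‖v - c‖ ≤ 1) :
    v = 0 := by
  by_contra hv
  have hpos : 0 < ‖v‖ := norm_pos_iff.mpr hv
  have hc : ‖-(‖v‖⁻¹ • v)‖ ≤ 1 := by
    rw [norm_neg, norm_smul, norm_inv, norm_norm, inv_mul_cancel₀ hpos.ne']
  have hsum : v - -(‖v‖⁻¹ • v) = (1 + ‖v‖⁻¹) • v := by rw [sub_neg_eq_add, add_smul, one_smul]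
  have := h _ hc
  rw [hsum, norm_smul, Real.norm_of_nonneg (by positivity), add_mul, one_mul,
    inv_mul_cancel₀ hpos.ne'] at this
  linarith

theorem norm_combo_sub_combo_le {u v u' v' : V} {t δ : ℝ} (ht : t ∈ Set.Icc (0 : ℝ) 1)
    (hu : ‖u - u'‖ ≤ δ) (hv : ‖v - v'‖ ≤ δ) :
    ‖(t • u + (1 - t) • v) - (t • u' + (1 - t) • v')‖ ≤ δ := by
  have key := convex_closedBall (0 : V) δ (mem_closedBall_zero_iff.mpr hu)
    (mem_closedBall_zero_iff.mpr hv) ht.1 (sub_nonneg.mpr ht.2) (add_sub_cancel t 1)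
  rw [mem_closedBall_zero_iff] at key
  rwa [show (t • u + (1 - t) • v) - (t • u' + (1 - t) • v') = t • (u - u') + (1 - t) • (v - v') by
    simp only [smul_sub]; abel]

theorem exists_norm_smul_le_one_norm_sub_smul_le {x a : V} {ε : ℝ} (hx : ‖x‖ ≤ 1)
    (hε : 0 ≤ ε) (hxa : ‖x - a‖ ≤ ε) : ∃ s : ℝ, ‖s • a‖ ≤ 1 ∧ ‖x - s • a‖ ≤ 2 * ε := by
  have ha : ‖a‖ ≤ 1 + ε := by linarith [norm_sub_norm_le a x, norm_sub_rev a x]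
  have hpos : 0 < 1 + ε := by linarith
  refine ⟨(1 + ε)⁻¹, ?_, ?_⟩
  · rw [norm_smul, Real.norm_of_nonneg (by positivity), inv_mul_le_iff₀ hpos, mul_one]
    exact ha
  · have hcoef : (1 - (1 + ε)⁻¹) * (1 + ε) = ε := by field_simp; ring
    have hcoef_nonneg : 0 ≤ 1 - (1 + ε)⁻¹ := by
      rw [sub_nonneg]; exact inv_le_one_of_one_le₀ (by linarith)
    calc ‖x - (1 + ε)⁻¹ • a‖ = ‖(x - a) + (1 - (1 + ε)⁻¹) • a‖ := by
          rw [sub_smul, one_smul]; abel_nf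
      _ ≤ ‖x - a‖ + ‖(1 - (1 + ε)⁻¹) • a‖ := norm_add_le _ _
      _ = ‖x - a‖ + (1 - (1 + ε)⁻¹) * ‖a‖ := by
          rw [norm_smul, Real.norm_of_nonneg hcoef_nonneg]
      _ ≤ ε + (1 - (1 + ε)⁻¹) * (1 + ε) := by gcongr
      _ = 2 * ε := by rw [hcoef]; ring

theorem norm_map_combo_sub_combo_le {Y : Type*} [NormedAddCommGroup Y] [NormedSpace ℝ Y]
    {B : Set V} (hB : Convex ℝ B) {Δ : V → Y}
    (hΔ : ∀ a ∈ B, ∀ b ∈ B, ‖Δ a - Δ b‖ = ‖a - b‖) {a b p q : V} (ha : a ∈ B) (hb : b ∈ B)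
    (hp : p ∈ B) (hq : q ∈ B) {t δ : ℝ} (ht : t ∈ Set.Icc (0 : ℝ) 1)
    (hpq : Δ (t • p + (1 - t) • q) = t • Δ p + (1 - t) • Δ q)
    (hap : ‖a - p‖ ≤ δ) (hbq : ‖b - q‖ ≤ δ) :
    ‖Δ (t • a + (1 - t) • b) - (t • Δ a + (1 - t) • Δ b)‖ ≤ 2 * δ := by
  have hcombo : ∀ {u v}, u ∈ B → v ∈ B → t • u + (1 - t) • v ∈ B := fun hu hv =>
    hB hu hv ht.1 (sub_nonneg.mpr ht.2) (add_sub_cancel t 1)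
  calc ‖Δ (t • a + (1 - t) • b) - (t • Δ a + (1 - t) • Δ b)‖
      ≤ ‖Δ (t • a + (1 - t) • b) - Δ (t • p + (1 - t) • q)‖
        + ‖Δ (t • p + (1 - t) • q) - (t • Δ a + (1 - t) • Δ b)‖ :=
        norm_sub_le_norm_sub_add_norm_sub _ _ _
    _ ≤ δ + δ := by
        rw [hΔ _ (hcombo ha hb) _ (hcombo hp hq), hpq]
        refine add_le_add (norm_combo_sub_combo_le ht hap hbq) (norm_combo_sub_combo_le ht ?_ ?_)
        · rwa [hΔ p hp a ha, norm_sub_rev]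
        · rwa [hΔ q hq b hb, norm_sub_rev]
    _ = 2 * δ := by ring

end NormedSpace

theorem image_inter_iInter_closedBall {α β : Type*} [PseudoMetricSpace α] [PseudoMetricSpace β]
    {f : α → β} {B S : Set α} (hf : ∀ a ∈ B, ∀ b ∈ B, dist (f a) (f b) = dist a b)
    (hS : S ⊆ B) (r : ℝ) :
    f '' (B ∩ ⋂ m ∈ S, closedBall m r) = f '' B ∩ ⋂ m ∈ S, closedBall (f m) r := by
  ext y
  simp only [Set.mem_image, Set.mem_inter_iff, Set.mem_iInter₂, mem_closedBall]
  constructor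
  · rintro ⟨x, ⟨hxB, hx⟩, rfl⟩
    exact ⟨⟨x, hxB, rfl⟩, fun m hm => (hf x hxB m (hS hm)).trans_le (hx m hm)⟩
  · rintro ⟨⟨x, hxB, rfl⟩, hx⟩
    exact ⟨x, ⟨hxB, fun m hm => (hf x hxB m (hS hm)).symm.trans_le (hx m hm)⟩, rfl⟩

theorem StrongMankiewicz.map_combo_of_eq_inter {W : Type*} [NormedAddCommGroup W]
    [NormedSpace ℝ W] {K B S : Set W} (hK : StrongMankiewicz K)
    (hKB : K = B ∩ ⋂ m ∈ S, closedBall m 1) (hS : S ⊆ B) {Y : Type} [NormedAddCommGroup Y]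
    [NormedSpace ℝ Y] {Δ : W → Y} (hΔ : ∀ a ∈ B, ∀ b ∈ B, ‖Δ a - Δ b‖ = ‖a - b‖)
    (hconv : Convex ℝ (Δ '' B)) :
    ∀ a ∈ K, ∀ b ∈ K, ∀ t ∈ Set.Icc (0 : ℝ) 1,
      Δ (t • a + (1 - t) • b) = t • Δ a + (1 - t) • Δ b := by
  subst hKB
  have himage :=
    image_inter_iInter_closedBall (f := Δ) (by simpa only [dist_eq_norm] using hΔ) hS 1
  exact hK Y _ (hconv.inter (convex_iInter₂ fun m _ => convex_closedBall (Δ m) 1)) Δ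
    (fun a ha b hb => hΔ a ha.1 b hb.1) himage

namespace lp

variable {I : Type} {E : I → Type} [∀ i, NormedAddCommGroup (E i)]

theorem top_norm_le_iff {f : lp E ∞} {r : ℝ} (hr : 0 ≤ r) : ‖f‖ ≤ r ↔ ∀ i, ‖f i‖ ≤ r :=
  ⟨fun h i => (norm_apply_le_norm ENNReal.top_ne_zero f i).trans h, norm_le_of_forall_le hr⟩

theorem norm_sub_single_le_iff [DecidableEq I] {f : lp E ∞} {r : ℝ} (hf : ‖f‖ ≤ r) (i : I)
    (c : E i) : ‖f - lp.single ∞ i c‖ ≤ r ↔ ‖f i - c‖ ≤ r := by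
  have hr : 0 ≤ r := (norm_nonneg f).trans hf
  rw [top_norm_le_iff hr]
  refine ⟨fun h => by simpa using h i, fun h j => ?_⟩
  rcases eq_or_ne j i with rfl | hj
  · simpa using h
  · simpa [Pi.single_apply, hj] using (top_norm_le_iff hr).mp hf j

end lp

section CZero

variable {I : Type} {E : I → Type} [∀ i, NormedAddCommGroup (E i)]

theorem memC0_iff_tendsto {x : lp E ∞} : MemC0 x ↔ Tendsto (fun i => ‖x i‖) cofinite (𝓝 0) := by
  simp [MemC0, Metric.tendsto_nhds, eventually_cofinite]

theorem MemC0.add {x y : lp E ∞} (hx : MemC0 x) (hy : MemC0 y) : MemC0 (x + y) := by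
  rw [memC0_iff_tendsto] at *
  refine squeeze_zero (fun _ => norm_nonneg _) (fun i => ?_) (by simpa using hx.add hy)
  exact norm_add_le (x i) (y i)

theorem memC0_of_eq_zero_off (F : Finset I) {x : lp E ∞} (hx : ∀ i ∉ F, x i = 0) : MemC0 x :=
  memC0_iff_tendsto.mpr <| tendsto_const_nhds.congr' <|
    F.eventually_cofinite_notMem.mono fun i hi => by simp [hx i hi]

/-- The closed unit ball of the `c₀`-sum, as a subset of the `ℓ∞`-sum. -/
def c0UnitBall : Set (lp E ∞) := {z | MemC0 z ∧ ‖z‖ ≤ 1}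

theorem single_mem_c0UnitBall [DecidableEq I] {i : I} {c : E i} (hc : ‖c‖ ≤ 1) :
    lp.single ∞ i c ∈ (c0UnitBall : Set (lp E ∞)) := by
  refine ⟨memC0_of_eq_zero_off {i} fun j hj => ?_, by rwa [lp.norm_single ENNReal.zero_lt_top]⟩
  exact lp.single_apply_ne _ _ _ (Finset.notMem_singleton.mp hj)

def ballCenters [DecidableEq I] (F : Finset I) (M : ∀ i, Set (E i)) : Set (lp E ∞) :=
  (⋃ i ∈ F, lp.single ∞ i '' M i) ∪ ⋃ i ∉ F, lp.single ∞ i '' closedBall 0 1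

theorem ballCenters_subset_c0UnitBall [DecidableEq I] {F : Finset I} {M : ∀ i, Set (E i)}
    (hM : ∀ i ∈ F, ∀ m ∈ M i, ‖m‖ ≤ 1) : ballCenters F M ⊆ c0UnitBall := by
  rintro _ (h | h) <;> simp only [Set.mem_iUnion, Set.mem_image] at h <;>
    obtain ⟨i, hi, c, hc, rfl⟩ := h
  · exact single_mem_c0UnitBall (hM i hi c hc)
  · exact single_mem_c0UnitBall (mem_closedBall_zero_iff.mp hc)

variable [∀ i, NormedSpace ℝ (E i)]

theorem MemC0.const_smul {x : lp E ∞} (hx : MemC0 x) (c : ℝ) : MemC0 (c • x) := by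
  rw [memC0_iff_tendsto] at *
  simpa [norm_smul] using hx.const_mul ‖c‖

theorem convex_c0UnitBall : Convex ℝ (c0UnitBall : Set (lp E ∞)) := by
  rintro x ⟨hx, hx1⟩ y ⟨hy, hy1⟩ s t hs ht hst
  refine ⟨(hx.const_smul s).add (hy.const_smul t), ?_⟩
  simpa using convex_closedBall (0 : lp E ∞) 1 (mem_closedBall_zero_iff.mpr hx1)
    (mem_closedBall_zero_iff.mpr hy1) hs ht hst

/-- The closed unit ball of the `ℓ∞`-sum of `(Z i)_{i ∈ F}`, as a subset of the `ℓ∞`-sum. -/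
def subsumUnitBall (F : Finset I) (Z : ∀ i, Submodule ℝ (E i)) : Set (lp E ∞) :=
  {z | ‖z‖ ≤ 1 ∧ (∀ i, z i ∈ Z i) ∧ ∀ i ∉ F, z i = 0}

theorem exists_mem_subsumUnitBall_norm_sub_le {F : Finset I} {Z : ∀ i, Submodule ℝ (E i)}
    {x a : lp E ∞} (hx : ‖x‖ ≤ 1) (haZ : ∀ i, a i ∈ Z i) (haF : ∀ i ∉ F, a i = 0) {ε : ℝ}
    (hε : 0 ≤ ε) (hxa : ‖x - a‖ ≤ ε) : ∃ p ∈ subsumUnitBall F Z, ‖x - p‖ ≤ 2 * ε := by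
  obtain ⟨s, hs1, hxs⟩ := exists_norm_smul_le_one_norm_sub_smul_le hx hε hxa
  refine ⟨s • a, ⟨hs1, fun i => ?_, fun i hi => ?_⟩, hxs⟩
  · simpa using (Z i).smul_mem s (haZ i)
  · simp [haF i hi]

theorem subsumUnitBall_eq [DecidableEq I] {F : Finset I} {Z : ∀ i, Submodule ℝ (E i)}
    {M : ∀ i, Set (E i)}
    (hZM : ∀ i ∈ F,
      {z : E i | z ∈ Z i ∧ ‖z‖ ≤ 1} = {z : E i | ‖z‖ ≤ 1 ∧ ∀ m ∈ M i, ‖z - m‖ ≤ 1}) :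
    subsumUnitBall F Z = c0UnitBall ∩ ⋂ m ∈ ballCenters F M, closedBall m 1 := by
  ext z
  simp only [Set.mem_inter_iff, Set.mem_iInter₂, mem_closedBall, dist_eq_norm]
  constructor
  · rintro ⟨hz1, hzZ, hzF⟩
    refine ⟨⟨memC0_of_eq_zero_off F hzF, hz1⟩, fun m hm => ?_⟩
    simp only [ballCenters, Set.mem_union, Set.mem_iUnion, Set.mem_image] at hm
    obtain ⟨i, hi, c, hc, rfl⟩ | ⟨i, hi, c, hc, rfl⟩ := hm <;>
      rw [lp.norm_sub_single_le_iff hz1]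
    · have hzi : z i ∈ {z : E i | z ∈ Z i ∧ ‖z‖ ≤ 1} :=
        ⟨hzZ i, (lp.top_norm_le_iff zero_le_one).mp hz1 i⟩
      rw [hZM i hi] at hzi
      exact hzi.2 c hc
    · simpa [hzF i hi] using hc
  · rintro ⟨⟨-, hz1⟩, hball⟩
    have hcoord : ∀ i (c : E i), lp.single ∞ i c ∈ ballCenters F M → ‖z i - c‖ ≤ 1 :=
      fun i c hc => (lp.norm_sub_single_le_iff hz1 i c).mp (hball _ hc)
    have hzF : ∀ i ∉ F, z i = 0 := fun i hi =>
      eq_zero_of_forall_norm_sub_le_one fun c hc => hcoord i c <|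
        Or.inr (Set.mem_iUnion₂_of_mem hi ⟨c, mem_closedBall_zero_iff.mpr hc, rfl⟩)
    refine ⟨hz1, fun i => ?_, hzF⟩
    by_cases hi : i ∈ F
    · have hzi : z i ∈ {z : E i | ‖z‖ ≤ 1 ∧ ∀ m ∈ M i, ‖z - m‖ ≤ 1} :=
        ⟨(lp.top_norm_le_iff zero_le_one).mp hz1 i,
          fun m hm => hcoord i m (Or.inl (Set.mem_iUnion₂_of_mem hi ⟨m, hm, rfl⟩))⟩
      rw [← hZM i hi] at hzi
      exact hzi.1
    · rw [hzF i hi]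
      exact zero_mem _

end CZero

theorem stmt10_general {I : Type} {E : I → Type}
    [∀ i, NormedAddCommGroup (E i)] [∀ i, NormedSpace ℝ (E i)]
    (hyp : ∀ x : lp E ∞, MemC0 x → ∀ y : lp E ∞, MemC0 y → ∀ ε > (0 : ℝ),
      ∃ (F : Finset I) (Z : ∀ i, Submodule ℝ (E i)) (a b : lp E ∞),
        (∀ i, IsClosed (Z i : Set (E i))) ∧
        (∀ i, a i ∈ Z i) ∧ (∀ i, b i ∈ Z i) ∧
        (∀ i ∉ F, a i = 0) ∧ (∀ i ∉ F, b i = 0) ∧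
        (∀ i ∈ F, ∃ M : Set (E i), (∀ m ∈ M, ‖m‖ ≤ 1) ∧
          {z : E i | z ∈ Z i ∧ ‖z‖ ≤ 1} =
            {z : E i | ‖z‖ ≤ 1 ∧ ∀ m ∈ M, ‖z - m‖ ≤ 1}) ∧
        ‖x - a‖ < ε ∧ ‖y - b‖ < ε ∧
        StrongMankiewicz {z : lp E ∞ | ‖z‖ ≤ 1 ∧ (∀ i, z i ∈ Z i) ∧ ∀ i ∉ F, z i = 0}) :
    ∀ (Y : Type) [NormedAddCommGroup Y] [NormedSpace ℝ Y] (L : Set Y), Convex ℝ L →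
      ∀ Δ : lp E ∞ → Y,
        (∀ a ∈ {z : lp E ∞ | MemC0 z ∧ ‖z‖ ≤ 1},
          ∀ b ∈ {z : lp E ∞ | MemC0 z ∧ ‖z‖ ≤ 1}, ‖Δ a - Δ b‖ = ‖a - b‖) →
        Δ '' {z : lp E ∞ | MemC0 z ∧ ‖z‖ ≤ 1} = L →
        ∀ a ∈ {z : lp E ∞ | MemC0 z ∧ ‖z‖ ≤ 1},
          ∀ b ∈ {z : lp E ∞ | MemC0 z ∧ ‖z‖ ≤ 1}, ∀ t ∈ Set.Icc (0 : ℝ) 1,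
            Δ (t • a + (1 - t) • b) = t • Δ a + (1 - t) • Δ b := by
  classical
  intro Y _ _ L hL Δ hΔ hΔL a ha b hb t ht
  refine eq_of_forall_dist_le fun δ hδ => ?_
  obtain ⟨F, Z, a', b', -, haZ, hbZ, haF, hbF, hZM, haa', hbb', hSM⟩ :=
    hyp a ha.1 b hb.1 (δ / 4) (by positivity)
  choose! M hM hZM using hZM
  have hK := subsumUnitBall_eq (Z := Z) hZM
  have hconv : Convex ℝ (Δ '' c0UnitBall) := hΔL ▸ hL
  have haff := hSM.map_combo_of_eq_inter hK (ballCenters_subset_c0UnitBall hM) hΔ hconv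
  obtain ⟨p, hp, hap⟩ :=
    exists_mem_subsumUnitBall_norm_sub_le ha.2 haZ haF (by positivity) haa'.le
  obtain ⟨q, hq, hbq⟩ :=
    exists_mem_subsumUnitBall_norm_sub_le hb.2 hbZ hbF (by positivity) hbb'.le
  have hpB : p ∈ c0UnitBall := (hK.subset hp).1
  have hqB : q ∈ c0UnitBall := (hK.subset hq).1
  have key := norm_map_combo_sub_combo_le (B := (c0UnitBall : Set (lp E ∞))) (Δ := Δ)
    convex_c0UnitBall hΔ ha hb hpB hqB ht (haff p hp q hq t ht) hap hbq
  rw [dist_eq_norm]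
  linarith

/-- Proposition: a criterion for the closed unit ball of a `c₀`-sum `X = ⊕^{c₀} Xᵢ` to
satisfy the strong Mankiewicz property, via finite ℓ∞-sums of closed subspaces `Zᵢ`
whose unit balls are determined by sets `Mᵢ` as in hypothesis (1). -/
theorem stmt10 {I : Type} {E : I → Type}
    [∀ i, NormedAddCommGroup (E i)] [∀ i, NormedSpace ℝ (E i)] [∀ i, CompleteSpace (E i)]
    (hyp : ∀ x : lp E ∞, MemC0 x → ∀ y : lp E ∞, MemC0 y → ∀ ε > (0 : ℝ),
      ∃ (F : Finset I) (Z : ∀ i, Submodule ℝ (E i)) (a b : lp E ∞),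
        (∀ i, IsClosed (Z i : Set (E i))) ∧
        (∀ i, a i ∈ Z i) ∧ (∀ i, b i ∈ Z i) ∧
        (∀ i ∉ F, a i = 0) ∧ (∀ i ∉ F, b i = 0) ∧
        (∀ i ∈ F, ∃ M : Set (E i), (∀ m ∈ M, ‖m‖ ≤ 1) ∧
          {z : E i | z ∈ Z i ∧ ‖z‖ ≤ 1} =
            {z : E i | ‖z‖ ≤ 1 ∧ ∀ m ∈ M, ‖z - m‖ ≤ 1}) ∧
        ‖x - a‖ < ε ∧ ‖y - b‖ < ε ∧
        StrongMankiewicz {z : lp E ∞ | ‖z‖ ≤ 1 ∧ (∀ i, z i ∈ Z i) ∧ ∀ i ∉ F, z i = 0}) :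
    ∀ (Y : Type) [NormedAddCommGroup Y] [NormedSpace ℝ Y] (L : Set Y), Convex ℝ L →
      ∀ Δ : lp E ∞ → Y,
        (∀ a ∈ {z : lp E ∞ | MemC0 z ∧ ‖z‖ ≤ 1},
          ∀ b ∈ {z : lp E ∞ | MemC0 z ∧ ‖z‖ ≤ 1}, ‖Δ a - Δ b‖ = ‖a - b‖) →
        Δ '' {z : lp E ∞ | MemC0 z ∧ ‖z‖ ≤ 1} = L →
        ∀ a ∈ {z : lp E ∞ | MemC0 z ∧ ‖z‖ ≤ 1},
          ∀ b ∈ {z : lp E ∞ | MemC0 z ∧ ‖z‖ ≤ 1}, ∀ t ∈ Set.Icc (0 : ℝ) 1,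
            Δ (t • a + (1 - t) • b) = t • Δ a + (1 - t) • Δ b :=
  stmt10_general hyp

end
end
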